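/- arXiv:2302.03059 — 2 statements merged into one kernel-verified Lean document; each statement's English description precedes it below -/
import Mathlib

section
/- The map T̂₁ : (ℂ \ {0})³ → (ℂ \ {0})³ defined by T̂₁(x,y,z) = (x, x·z, y·x⁻¹) satisfies the tetrahedron equation T¹²³ ∘ T¹⁴⁵ ∘ T²⁴⁶ ∘ T³⁵⁶ = T³⁵⁶ ∘ T²⁴⁶ ∘ T¹⁴⁵ ∘ T¹²³, is involutive (T̂₁ ∘ T̂₁ = id), and the functions I₁(x,y,z) = x and I₂(x,y,z) = y·z are invariants of T̂₁ (Iⱼ ∘ T̂₁ = Iⱼ). -/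
section Tetra

variable {X : Type*}

/-- `T` acting on factors 1,2,3 of `X⁶`. -/
def lift123 (T : X × X × X → X × X × X) :
    X × X × X × X × X × X → X × X × X × X × X × X
  | (a, b, c, d, e, f) =>
    match T (a, b, c) with
    | (a', b', c') => (a', b', c', d, e, f)

/-- `T` acting on factors 1,4,5 of `X⁶`. -/
def lift145 (T : X × X × X → X × X × X) :
    X × X × X × X × X × X → X × X × X × X × X × X
  | (a, b, c, d, e, f) =>
    match T (a, d, e) with
    | (a', d', e') => (a', b, c, d', e', f)

/-- `T` acting on factors 2,4,6 of `X⁶`. -/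
def lift246 (T : X × X × X → X × X × X) :
    X × X × X × X × X × X → X × X × X × X × X × X
  | (a, b, c, d, e, f) =>
    match T (b, d, f) with
    | (b', d', f') => (a, b', c, d', e, f')

/-- `T` acting on factors 3,5,6 of `X⁶`. -/
def lift356 (T : X × X × X → X × X × X) :
    X × X × X × X × X × X → X × X × X × X × X × X
  | (a, b, c, d, e, f) =>
    match T (c, e, f) with
    | (c', e', f') => (a, b, c', d, e', f')

/-- The Zamolodchikov tetrahedron equation for a map `T : X³ → X³`. -/
def IsTetrahedronMap (T : X × X × X → X × X × X) : Prop :=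
  lift123 T ∘ lift145 T ∘ lift246 T ∘ lift356 T =
    lift356 T ∘ lift246 T ∘ lift145 T ∘ lift123 T

end Tetra

/-- The map `T̂₁(x,y,z) = (x, x·z, y·x⁻¹)` on `(ℂ \ {0})³`. -/
def Th1 : ℂˣ × ℂˣ × ℂˣ → ℂˣ × ℂˣ × ℂˣ := fun (x, y, z) => (x, x * z, y * x⁻¹)

/-- The invariant `I₁(x,y,z) = x`. -/
def I1 : ℂˣ × ℂˣ × ℂˣ → ℂ := fun (x, _, _) => (x : ℂ)

/-- The invariant `I₂(x,y,z) = y·z`. -/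
def I2 : ℂˣ × ℂˣ × ℂˣ → ℂ := fun (_, y, z) => (y : ℂ) * (z : ℂ)

theorem Th1_tetrahedron_involutive_invariants :
    IsTetrahedronMap Th1 ∧ (Th1 ∘ Th1 = id) ∧ (I1 ∘ Th1 = I1) ∧ (I2 ∘ Th1 = I2) := by
  refine ⟨?_, ?_, ?_, ?_⟩
  · funext p
    obtain ⟨a, b, c, d, e, f⟩ := p
    simp only [IsTetrahedronMap, Function.comp_apply, lift123, lift145, lift246, lift356, Th1]
    refine Prod.ext ?_ (Prod.ext ?_ (Prod.ext ?_ (Prod.ext ?_ (Prod.ext ?_ ?_)))) <;> simp <;> group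
  · funext p
    obtain ⟨x, y, z⟩ := p
    simp only [Function.comp_apply, Th1, id]
    refine Prod.ext ?_ (Prod.ext ?_ ?_) <;> simp
  · funext p
    obtain ⟨x, y, z⟩ := p
    simp [Th1, I1]
  · funext p
    obtain ⟨x, y, z⟩ := p
    simp only [Function.comp_apply, Th1, I2]
    field_simp
    simp only [Units.val_mul, Units.val_inv_eq_inv_val]
    rw [mul_comm (y:ℂ) ((x:ℂ)⁻¹), mul_mul_mul_comm, mul_inv_cancel₀ x.ne_zero, one_mul, mul_comm]
end

section
/- Let L₁₂(x), L₁₃(x), L₂₃(x) be the 3×3 complex matrices L₁₂(x) = [[0,x,0],[x⁻¹,0,0],[0,0,1]], L₁₃(x) = [[0,0,x],[0,1,0],[x⁻¹,0,0]], L₂₃(x) = [[1,0,0],[0,0,x],[0,x⁻¹,0]] for x ∈ ℂ \ {0}. Then for each of the four maps T̂₁(x,y,z) = (x, x·z, y·x⁻¹), T̂₂(x,y,z) = (y·z⁻¹, x·z, z), T̂₃(x,y,z) = (y·z, x·z, z⁻¹), T̂₄(x,y,z) = (x⁻¹, x·z, x·y) on (ℂ \ {0})³, the relation (u,v,w) =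 T̂ᵢ(x,y,z) implies the matrix identity L₁₂(u)·L₁₃(v)·L₂₃(w) = L₂₃(z)·L₁₃(y)·L₁₂(x). -/
noncomputable section

def Th2 : ℂˣ × ℂˣ × ℂˣ → ℂˣ × ℂˣ × ℂˣ := fun (x, y, z) => (y * z⁻¹, x * z, z)

def Th3 : ℂˣ × ℂˣ × ℂˣ → ℂˣ × ℂˣ × ℂˣ := fun (x, y, z) => (y * z, x * z, z⁻¹)

def Th4 : ℂˣ × ℂˣ × ℂˣ → ℂˣ × ℂˣ × ℂˣ := fun (x, y, z) => (x⁻¹, x * z, x * y)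

def L12 (x : ℂˣ) : Matrix (Fin 3) (Fin 3) ℂ :=
  !![0, (x : ℂ), 0; (x : ℂ)⁻¹, 0, 0; 0, 0, 1]

def L13 (x : ℂˣ) : Matrix (Fin 3) (Fin 3) ℂ :=
  !![0, 0, (x : ℂ); 0, 1, 0; (x : ℂ)⁻¹, 0, 0]

def L23 (x : ℂˣ) : Matrix (Fin 3) (Fin 3) ℂ :=
  !![1, 0, 0; 0, 0, (x : ℂ); 0, (x : ℂ)⁻¹, 0]

lemma L12_mul_L13_mul_L23 (u v w : ℂˣ) :
    L12 u * L13 v * L23 w =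
      !![0, 0, ((u * w : ℂˣ) : ℂ); 0, ((u * w : ℂˣ) : ℂ)⁻¹ * v, 0; (v : ℂ)⁻¹, 0, 0] := by
  ext i j
  fin_cases i <;> fin_cases j <;>
    simp [L12, L13, L23, Matrix.mul_apply, Fin.sum_univ_three, mul_comm, mul_assoc]

lemma L23_mul_L13_mul_L12 (x y z : ℂˣ) :
    L23 z * L13 y * L12 x =
      !![0, 0, (y : ℂ); 0, (y : ℂ)⁻¹ * ((x * z : ℂˣ) : ℂ), 0; ((x * z : ℂˣ) : ℂ)⁻¹, 0, 0] := by
  ext i j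
  fin_cases i <;> fin_cases j <;>
    simp [L12, L13, L23, Matrix.mul_apply, Fin.sum_univ_three, mul_comm, mul_assoc]

/-- Both sides of the local Yang–Baxter equation are monomial matrices, so it reduces to two
equations between their entries. -/
theorem local_yang_baxter_iff (x y z u v w : ℂˣ) :
    L12 u * L13 v * L23 w = L23 z * L13 y * L12 x ↔ u * w = y ∧ v = x * z := by
  rw [L12_mul_L13_mul_L23, L23_mul_L13_mul_L12]
  constructor
  · intro h
    have h₀₂ := congrFun (congrFun h 0) 2
    have h₂₀ := congrFun (congrFun h 2) 0
    simp only [Matrix.of_apply, Matrix.cons_val', Matrix.cons_val_zero, Matrix.cons_val_two,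
      Matrix.empty_val', Matrix.cons_val_fin_one, Matrix.tail_cons, Matrix.head_cons] at h₀₂ h₂₀
    exact ⟨Units.ext h₀₂, Units.ext (inv_injective h₂₀)⟩
  · rintro ⟨rfl, rfl⟩
    rfl

theorem Lax_representation_Th1_Th2_Th3_Th4 :
    ∀ x y z u v w : ℂˣ,
      ((u, v, w) = Th1 (x, y, z) →
        L12 u * L13 v * L23 w = L23 z * L13 y * L12 x) ∧
      ((u, v, w) = Th2 (x, y, z) →
        L12 u * L13 v * L23 w = L23 z * L13 y * L12 x) ∧
      ((u, v, w) = Th3 (x, y, z) →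
        L12 u * L13 v * L23 w = L23 z * L13 y * L12 x) ∧
      ((u, v, w) = Th4 (x, y, z) →
        L12 u * L13 v * L23 w = L23 z * L13 y * L12 x) := by
  intro x y z u v w
  simp only [local_yang_baxter_iff, Th1, Th2, Th3, Th4, Prod.mk.injEq]
  refine ⟨?_, ?_, ?_, ?_⟩ <;>
  · rintro ⟨rfl, rfl, rfl⟩
    constructor <;> simp [mul_comm, mul_left_comm]
end
end
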